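/- For every smooth function g : M → ℝ and all integers k ≥ 1 and m ≥ 0, one has {Î_k, g}_m(X,Y) = −tr(∇_Y g(X,Y) · X^{k+m−1}) for all (X,Y) ∈ M; consequently {Î_k, g}_{m+1} = {Î_{k+1}, g}_m for all k ≥ 1 and m ≥ 0, so the Hamiltonians Î_k form Lenard chains with respect to each consecutive pair of brackets of the hierarchy. -/

import Mathlib

attribute [local instance] Matrix.normedAddCommGroup Matrix.normedSpace

/-- The phase space `M = Mat_n(ℝ) × Mat_n(ℝ)`. -/
abbrev MM (n : ℕ) := Matrix (Fin n) (Fin n) ℝ × Matrix (Fin n) (Fin n) ℝ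

/-- The gradient matrix `∇_X f`, with `(∇_X f)_{ij} = ∂f/∂X_{ji}`. -/
noncomputable def gradX {n : ℕ} (f : MM n → ℝ) (p : MM n) : Matrix (Fin n) (Fin n) ℝ :=
  fun i j => fderiv ℝ f p (Matrix.single j i 1, 0)

/-- The gradient matrix `∇_Y f`, with `(∇_Y f)_{ij} = ∂f/∂Y_{ji}`. -/
noncomputable def gradY {n : ℕ} (f : MM n → ℝ) (p : MM n) : Matrix (Fin n) (Fin n) ℝ :=
  fun i j => fderiv ℝ f p (0, Matrix.single j i 1)

/-- The `m`-th bracket of the Calogero-Moser hierarchy: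
`{f,g}_m(X,Y) = tr(X^m (∇_Y f ∇_X g − ∇_Y g ∇_X f))
  + Σ_{i=1}^{m} tr(Y X^{m−i} (∇_Y f X^{i−1} ∇_Y g − ∇_Y g X^{i−1} ∇_Y f))`. -/
noncomputable def pbracket {n : ℕ} (m : ℕ) (f g : MM n → ℝ) (p : MM n) : ℝ :=
  (p.1 ^ m * (gradY f p * gradX g p - gradY g p * gradX f p)).trace +
  ∑ i ∈ Finset.range m,
    (p.2 * p.1 ^ (m - 1 - i) *
      (gradY f p * p.1 ^ i * gradY g p - gradY g p * p.1 ^ i * gradY f p)).trace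

/-- Smoothness of a function on `M`. -/
def SmoothFn {n : ℕ} (f : MM n → ℝ) : Prop := ContDiff ℝ (⊤ : ℕ∞) f

/-- The Calogero-Moser Hamiltonian `Î_k(X,Y) = (1/k) tr(X^k)`. -/
noncomputable def Ihat {n : ℕ} (k : ℕ) (p : MM n) : ℝ := (1 / (k : ℝ)) * (p.1 ^ k).trace

noncomputable def mulCLM (n : ℕ) :
    Matrix (Fin n) (Fin n) ℝ →L[ℝ] Matrix (Fin n) (Fin n) ℝ →L[ℝ] Matrix (Fin n) (Fin n) ℝ :=
  LinearMap.mkContinuous₂ (LinearMap.mul ℝ _) n <| by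
    intro A B
    refine (Matrix.norm_le_iff (by positivity)).2 fun i j => ?_
    calc ‖(A * B) i j‖ = ‖∑ c, A i c * B c j‖ := by rw [Matrix.mul_apply]
      _ ≤ ∑ c, ‖A i c * B c j‖ := norm_sum_le _ _
      _ ≤ ∑ _c : Fin n, ‖A‖ * ‖B‖ := by
          refine Finset.sum_le_sum fun c _ => ?_
          rw [norm_mul]
          exact mul_le_mul (Matrix.norm_entry_le_entrywise_sup_norm A)
            (Matrix.norm_entry_le_entrywise_sup_norm B) (norm_nonneg _) (norm_nonneg _)
      _ = n * ‖A‖ * ‖B‖ := by simp [mul_assoc]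

@[simp] lemma mulCLM_apply {n : ℕ} (A B : Matrix (Fin n) (Fin n) ℝ) : mulCLM n A B = A * B := rfl

noncomputable def Dpow (n k : ℕ) (X : Matrix (Fin n) (Fin n) ℝ) :
    MM n →L[ℝ] Matrix (Fin n) (Fin n) ℝ :=
  ∑ i ∈ Finset.range k,
    ((mulCLM n (X ^ i)).comp ((mulCLM n).flip (X ^ (k - 1 - i)))).comp
      (ContinuousLinearMap.fst ℝ _ _)

lemma Dpow_apply (n k : ℕ) (X : Matrix (Fin n) (Fin n) ℝ) (v : MM n) :
    Dpow n k X v = ∑ i ∈ Finset.range k, X ^ i * v.1 * X ^ (k - 1 - i) := by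
  simp [Dpow, mul_assoc]
  refine Finset.sum_congr rfl fun i _ => ?_
  rfl

lemma hasFDerivAt_pow_MM (n k : ℕ) (p : MM n) :
    HasFDerivAt (fun q : MM n => q.1 ^ k) (Dpow n k p.1) p := by
  induction k with
  | zero =>
    have : Dpow n 0 p.1 = 0 := by simp [Dpow]
    rw [this]
    simpa using hasFDerivAt_const (1 : Matrix (Fin n) (Fin n) ℝ) p
  | succ k ih =>
    have hB := (mulCLM n).isBoundedBilinearMap.hasFDerivAt (p.1 ^ k, p.1)
    have hpair : HasFDerivAt (fun q : MM n => (q.1 ^ k, q.1))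
        ((Dpow n k p.1).prod (ContinuousLinearMap.fst ℝ _ _)) p :=
      ih.prodMk (hasFDerivAt_fst)
    have h := hB.comp p hpair
    have hfun : ((fun x : Matrix (Fin n) (Fin n) ℝ × Matrix (Fin n) (Fin n) ℝ =>
        mulCLM n x.1 x.2) ∘ fun q : MM n => (q.1 ^ k, q.1))
        = fun q : MM n => q.1 ^ (k + 1) := by
      funext q; simp [Function.comp, pow_succ]
    rw [← hfun]
    refine h.congr_fderiv (Eq.symm ?_)
    refine ContinuousLinearMap.ext fun v => ?_
    erw [ContinuousLinearMap.comp_apply, ContinuousLinearMap.prod_apply,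
      IsBoundedBilinearMap.deriv_apply, mulCLM_apply, mulCLM_apply]
    simp only [ContinuousLinearMap.comp_apply, ContinuousLinearMap.prod_apply,
      IsBoundedBilinearMap.deriv_apply, mulCLM_apply, ContinuousLinearMap.coe_fst',
      Dpow_apply]
    rw [Finset.sum_range_succ]
    rw [Finset.sum_mul]
    have hterm : ∀ i ∈ Finset.range k,
        p.1 ^ i * v.1 * p.1 ^ (k - 1 - i) * p.1 = p.1 ^ i * v.1 * p.1 ^ (k + 1 - 1 - i) := by
      intro i hi
      rw [Finset.mem_range] at hi
      have he : k + 1 - 1 - i = (k - 1 - i) + 1 := by omega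
      rw [he, pow_succ, ← mul_assoc]
    rw [Finset.sum_congr rfl hterm]
    simp [add_comm]

lemma trace_mul_std {n : ℕ} (A : Matrix (Fin n) (Fin n) ℝ) (i j : Fin n) :
    (A * Matrix.single j i 1).trace = A i j := by
  rw [Matrix.trace]
  rw [Finset.sum_eq_single i]
  · simp [Matrix.diag]
  · intro b _ hb
    simp only [Matrix.diag]
    exact Matrix.mul_single_apply_of_ne (c := (1:ℝ)) j i b b hb A
  · simp

lemma hasFDerivAt_Ihat (n k : ℕ) (p : MM n) :
    HasFDerivAt (Ihat k)
      ((1 / (k : ℝ)) • ((Matrix.traceLinearMap (Fin n) ℝ ℝ).toContinuousLinearMap.comp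
        (Dpow n k p.1))) p := by
  have htr : HasFDerivAt (fun q : MM n => (q.1 ^ k).trace)
      ((Matrix.traceLinearMap (Fin n) ℝ ℝ).toContinuousLinearMap.comp (Dpow n k p.1)) p := by
    have hlin := ((Matrix.traceLinearMap (Fin n) ℝ ℝ).toContinuousLinearMap).hasFDerivAt
      (x := p.1 ^ k)
    exact hlin.comp p (hasFDerivAt_pow_MM n k p)
  have := htr.const_mul (1 / (k : ℝ))
  exact this

lemma fderiv_Ihat (n k : ℕ) (p : MM n) (v : MM n) :
    fderiv ℝ (Ihat k) p v
      = (1 / (k : ℝ)) * ∑ i ∈ Finset.range k, (p.1 ^ i * v.1 * p.1 ^ (k - 1 - i)).trace := by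
  rw [(hasFDerivAt_Ihat n k p).fderiv]
  simp [Dpow_apply, Matrix.trace_sum]

lemma gradY_Ihat (n k : ℕ) (p : MM n) : gradY (Ihat k) p = 0 := by
  funext i j
  rw [gradY, fderiv_Ihat]
  simp

lemma gradX_Ihat (n k : ℕ) (hk : 1 ≤ k) (p : MM n) :
    gradX (Ihat k) p = p.1 ^ (k - 1) := by
  funext i j
  rw [gradX]
  show fderiv ℝ (Ihat k) p (Matrix.single j i 1, 0) = _
  rw [fderiv_Ihat]
  have hterm : ∀ i' ∈ Finset.range k,
      (p.1 ^ i' * (Matrix.single j i (1:ℝ)) * p.1 ^ (k - 1 - i')).trace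
        = (p.1 ^ (k - 1)) i j := by
    intro i' hi'
    rw [Finset.mem_range] at hi'
    rw [Matrix.trace_mul_cycle]
    have : p.1 ^ (k - 1 - i') * p.1 ^ i' = p.1 ^ (k - 1) := by
      rw [← pow_add]; congr 1; omega
    rw [this, trace_mul_std]
  rw [Finset.sum_congr rfl hterm]
  simp only [Finset.sum_const, Finset.card_range, nsmul_eq_mul]
  have hk' : (k : ℝ) ≠ 0 := Nat.cast_ne_zero.mpr (by omega)
  field_simp

lemma pbracket_Ihat (n : ℕ) (g : MM n → ℝ) (k m : ℕ) (hk : 1 ≤ k) (p : MM n) :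
    pbracket m (Ihat k) g p = -(gradY g p * p.1 ^ (k + m - 1)).trace := by
  rw [pbracket, gradY_Ihat, gradX_Ihat n k hk]
  rw [Finset.sum_eq_zero (fun i _ => by simp)]
  rw [add_zero]
  have h1 : p.1 ^ m * ((0 : Matrix (Fin n) (Fin n) ℝ) * gradX g p
      - gradY g p * p.1 ^ (k - 1)) = -(p.1 ^ m * (gradY g p * p.1 ^ (k - 1))) := by
    rw [Matrix.zero_mul, zero_sub, Matrix.mul_neg]
  rw [h1, Matrix.trace_neg, Matrix.trace_mul_comm]
  rw [Matrix.mul_assoc, ← pow_add]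
  have : k - 1 + m = k + m - 1 := by omega
  rw [this]

/-- For every smooth `g` and all `k ≥ 1`, `m ≥ 0` one has
`{Î_k, g}_m(X,Y) = −tr(∇_Y g(X,Y) · X^{k+m−1})`; consequently
`{Î_k, g}_{m+1} = {Î_{k+1}, g}_m`, so the Hamiltonians `Î_k` form Lenard chains with
respect to each consecutive pair of brackets of the hierarchy. -/
theorem Ihat_bracket_eq (n : ℕ) (hn : 1 ≤ n) :
    (∀ (g : MM n → ℝ), SmoothFn g → ∀ (k m : ℕ), 1 ≤ k →
      ∀ p : MM n, pbracket m (Ihat k) g p = -(gradY g p * p.1 ^ (k + m - 1)).trace) ∧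
    (∀ (g : MM n → ℝ), SmoothFn g → ∀ (k m : ℕ), 1 ≤ k →
      ∀ p : MM n, pbracket (m + 1) (Ihat k) g p = pbracket m (Ihat (k + 1)) g p) := by
  constructor
  · intro g _ k m hk p
    exact pbracket_Ihat n g k m hk p
  · intro g _ k m hk p
    rw [pbracket_Ihat n g k (m + 1) hk p, pbracket_Ihat n g (k + 1) m (by omega) p]
    have : k + (m + 1) - 1 = k + 1 + m - 1 := by omega
    rw [this]
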